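/- arXiv:math/0703199 — 3 statements merged into one kernel-verified Lean document; each statement's English description precedes it below -/
import Mathlib

section
/- Asymptotic dimension is a quasi-isometry invariant: if f : X → Y is a quasi-isometry between metric spaces, then asdim(X) = asdim(Y). -/
/-- `AsdimLE ρ n`: the space `X` with distance function `ρ` has asymptotic dimension at most
`n`: for every `d > 0` there are `n + 1` families of subsets whose union is a uniformly
bounded cover, and within each family distinct sets are `d`-disjoint. -/
def AsdimLE {X : Type*} (ρ : X → X → ℝ) (n : ℕ) : Prop :=
  ∀ d : ℝ, 0 < d → ∃ 𝒰 : Fin (n + 1) → Set (Set X),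
    (∃ R : ℝ, ∀ i, ∀ U ∈ 𝒰 i, ∀ x ∈ U, ∀ y ∈ U, ρ x y ≤ R) ∧
    (∀ x : X, ∃ i, ∃ U ∈ 𝒰 i, x ∈ U) ∧
    (∀ i, ∀ U ∈ 𝒰 i, ∀ V ∈ 𝒰 i, U ≠ V → ∀ x ∈ U, ∀ y ∈ V, d ≤ ρ x y)

/-- The asymptotic dimension of the space `X` with distance function `ρ`,
as an extended natural number (`⊤` if no finite `n` works). -/
noncomputable def asdim {X : Type*} (ρ : X → X → ℝ) : ℕ∞ :=
  sInf {m : ℕ∞ | ∃ n : ℕ, m = (n : ℕ∞) ∧ AsdimLE ρ n}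

/-- Pulling back along a coarsely Lipschitz-below map. -/
lemma asdimLE_pullback {X Y : Type*} [MetricSpace X] [MetricSpace Y]
    (f : X → Y) (L C : ℝ) (hL : 1 ≤ L) (hC : 0 ≤ C)
    (hlower : ∀ x x' : X, (1 / L) * dist x x' - C ≤ dist (f x) (f x'))
    (hupper : ∀ x x' : X, dist (f x) (f x') ≤ L * dist x x' + C)
    {n : ℕ} (hY : AsdimLE (fun a b : Y => dist a b) n) :
    AsdimLE (fun a b : X => dist a b) n := by
  have hL0 : (0:ℝ) < L := lt_of_lt_of_le one_pos hL
  intro d hd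
  obtain ⟨𝒰, ⟨R, hR⟩, hcov, hdisj⟩ := hY (L * d + C) (by nlinarith)
  refine ⟨fun i => (fun U => f ⁻¹' U) '' 𝒰 i, ⟨L * (R + C), ?_⟩, ?_, ?_⟩
  · rintro i V ⟨U, hU, rfl⟩ x hx y hy
    have h1 : dist (f x) (f y) ≤ R := hR i U hU _ hx _ hy
    have h2 := hlower x y
    have h3 : (1 / L) * dist x y ≤ R + C := by linarith
    have h4 := mul_le_mul_of_nonneg_left h3 hL0.le
    calc dist x y = L * ((1 / L) * dist x y) := by field_simp
      _ ≤ L * (R + C) := h4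
  · intro x
    obtain ⟨i, U, hU, hx⟩ := hcov (f x)
    exact ⟨i, f ⁻¹' U, ⟨U, hU, rfl⟩, hx⟩
  · rintro i V₁ ⟨U₁, hU₁, rfl⟩ V₂ ⟨U₂, hU₂, rfl⟩ hne x hx y hy
    have hUne : U₁ ≠ U₂ := by rintro rfl; exact hne rfl
    have h1 : L * d + C ≤ dist (f x) (f y) := hdisj i U₁ hU₁ U₂ hU₂ hUne _ hx _ hy
    have h2 := hupper x y
    have : L * d ≤ L * dist x y := by linarith
    exact le_of_mul_le_mul_left this hL0

/-- Pushing forward along a coarsely dense quasi-isometry. -/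
lemma asdimLE_pushforward {X Y : Type*} [MetricSpace X] [MetricSpace Y]
    (f : X → Y) (L C : ℝ) (hL : 1 ≤ L) (hC : 0 ≤ C)
    (hlower : ∀ x x' : X, (1 / L) * dist x x' - C ≤ dist (f x) (f x'))
    (hupper : ∀ x x' : X, dist (f x) (f x') ≤ L * dist x x' + C)
    (hdense : ∀ y : Y, ∃ x : X, dist y (f x) ≤ C)
    {n : ℕ} (hX : AsdimLE (fun a b : X => dist a b) n) :
    AsdimLE (fun a b : Y => dist a b) n := by
  have hL0 : (0:ℝ) < L := lt_of_lt_of_le one_pos hL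
  intro d hd
  obtain ⟨𝒰, ⟨R, hR⟩, hcov, hdisj⟩ := hX (L * (d + 3 * C)) (by nlinarith)
  refine ⟨fun i => (fun U : Set X => {y : Y | ∃ x ∈ U, dist y (f x) ≤ C}) '' 𝒰 i,
    ⟨L * R + 3 * C, ?_⟩, ?_, ?_⟩
  · rintro i V ⟨U, hU, rfl⟩ y ⟨x, hx, hyx⟩ y' ⟨x', hx', hyx'⟩
    have h1 : dist x x' ≤ R := hR i U hU _ hx _ hx'
    have h2 := hupper x x'
    have h3 : dist y y' ≤ dist y (f x) + dist (f x) (f x') + dist (f x') y' :=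
      dist_triangle4 _ _ _ _
    have h4 : dist (f x') y' = dist y' (f x') := dist_comm _ _
    have h5 : L * dist x x' ≤ L * R := mul_le_mul_of_nonneg_left h1 hL0.le
    linarith
  · intro y
    obtain ⟨x, hx⟩ := hdense y
    obtain ⟨i, U, hU, hxU⟩ := hcov x
    exact ⟨i, _, ⟨U, hU, rfl⟩, x, hxU, hx⟩
  · rintro i V₁ ⟨U₁, hU₁, rfl⟩ V₂ ⟨U₂, hU₂, rfl⟩ hne y ⟨x, hx, hyx⟩ y' ⟨x', hx', hyx'⟩
    have hUne : U₁ ≠ U₂ := by rintro rfl; exact hne rfl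
    have h1 : L * (d + 3 * C) ≤ dist x x' := hdisj i U₁ hU₁ U₂ hU₂ hUne _ hx _ hx'
    have h2 := hlower x x'
    have h3 : (1 / L) * (L * (d + 3 * C)) ≤ (1 / L) * dist x x' :=
      mul_le_mul_of_nonneg_left h1 (by positivity)
    have h4 : (1 / L) * (L * (d + 3 * C)) = d + 3 * C := by field_simp
    have h5 : dist (f x) (f x') ≤ dist (f x) y + dist y y' + dist y' (f x') :=
      dist_triangle4 _ _ _ _
    have h6 : dist (f x) y = dist y (f x) := dist_comm _ _
    have h7 : dist y' (f x') ≤ C := hyx'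
    linarith

/-- Asymptotic dimension is a quasi-isometry invariant. -/
theorem asdim_eq_of_quasiIsometry {X Y : Type*} [MetricSpace X] [MetricSpace Y]
    (f : X → Y) (L C : ℝ) (hL : 1 ≤ L) (hC : 0 ≤ C)
    (hlower : ∀ x x' : X, (1 / L) * dist x x' - C ≤ dist (f x) (f x'))
    (hupper : ∀ x x' : X, dist (f x) (f x') ≤ L * dist x x' + C)
    (hdense : ∀ y : Y, ∃ x : X, dist y (f x) ≤ C) :
    asdim (fun a b : X => dist a b) = asdim (fun a b : Y => dist a b) := by
  unfold asdim
  congr 1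
  ext m
  constructor
  · rintro ⟨n, rfl, h⟩
    exact ⟨n, rfl, asdimLE_pushforward f L C hL hC hlower hupper hdense h⟩
  · rintro ⟨n, rfl, h⟩
    exact ⟨n, rfl, asdimLE_pullback f L C hL hC hlower hupper h⟩
end

section
/- Let C be a building of type (W,S), B a fixed chamber, π the B-based folding map, and c a chamber. Suppose γ is a minimal gallery in W from 1 to some w, and that π(c) admits a reduced expression extending γ (i.e., some minimal gallery from 1 to π(c) in W begins with γ). Then there exists a minimal gallery from B to c in C whose π-projection begins with γ. -/
/-- A building of type `(W, S)` (Abramenko–Brown `W`-metric definition): a set of chambers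
`C` with a `W`-valued distance `δC` satisfying the standard building axioms (WD1)–(WD3). -/
structure IsBuilding {B W C : Type*} [Group W] {M : CoxeterMatrix B}
    (cs : CoxeterSystem M W) (δC : C → C → W) : Prop where
  eq_one_iff : ∀ c d : C, δC c d = 1 ↔ c = d
  wd2 : ∀ (c d d' : C) (i : B), δC d d' = cs.simple i →
    δC c d' = δC c d * cs.simple i ∨ δC c d' = δC c d
  wd2' : ∀ (c d d' : C) (i : B), δC d d' = cs.simple i →
    cs.length (δC c d * cs.simple i) = cs.length (δC c d) + 1 →
    δC c d' = δC c d * cs.simple i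
  wd3 : ∀ (c d : C) (i : B), ∃ d' : C, δC d d' = cs.simple i ∧
    δC c d' = δC c d * cs.simple i

/-- A gallery in the building: a sequence of consecutively adjacent chambers. -/
def IsGallery {B W C : Type*} [Group W] {M : CoxeterMatrix B}
    (cs : CoxeterSystem M W) (δC : C → C → W) (l : List C) : Prop :=
  l.Chain' (fun c d => ∃ i : B, δC c d = cs.simple i)

/-- A minimal gallery from `x` to `y`: a gallery starting at `x`, ending at `y`,
whose length (number of steps) equals `ℓ(δC x y)`. -/
def IsMinGallery {B W C : Type*} [Group W] {M : CoxeterMatrix B}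
    (cs : CoxeterSystem M W) (δC : C → C → W) (x y : C) (l : List C) : Prop :=
  IsGallery cs δC l ∧ l.head? = some x ∧ l.getLast? = some y ∧
    l.length = cs.length (δC x y) + 1

/-- A gallery in the Coxeter complex `W`: consecutive elements differ by a simple reflection
on the right. -/
def IsWGallery {B W : Type*} [Group W] {M : CoxeterMatrix B}
    (cs : CoxeterSystem M W) (l : List W) : Prop :=
  l.Chain' (fun u v => ∃ i : B, v = u * cs.simple i)

/-- A minimal gallery from `u` to `w` in the Coxeter complex `W`. -/
def IsMinWGallery {B W : Type*} [Group W] {M : CoxeterMatrix B}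
    (cs : CoxeterSystem M W) (u w : W) (l : List W) : Prop :=
  IsWGallery cs l ∧ l.head? = some u ∧ l.getLast? = some w ∧
    l.length = cs.length (u⁻¹ * w) + 1

/-! Lift a minimal gallery `η` of `W` from `1` to `δ(B, c)` that begins with `γ` to the building,
one chamber at a time starting from `c` and walking backwards: by (WD3) every chamber `d` has an
`s`-neighbour `d'` with `δ(B, d') = δ(B, d) s`. The lift projects onto `η`, so it begins at `B`
(the only chamber at distance `1`) and has the length of `η`, which is `ℓ(δ(B, c)) + 1`. -/

namespace IsBuilding

variable {B W C : Type*} [Group W] {M : CoxeterMatrix B} {cs : CoxeterSystem M W}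
  {δC : C → C → W}

theorem dist_self (hb : IsBuilding cs δC) (d : C) : δC d d = 1 :=
  (hb.eq_one_iff d d).mpr rfl

theorem dist_symm_of_eq_simple (hb : IsBuilding cs δC) {d d' : C} {i : B}
    (h : δC d d' = cs.simple i) : δC d' d = cs.simple i := by
  rcases hb.wd2 d' d d' i h with h' | h'
  · rw [hb.dist_self] at h'
    rw [eq_inv_of_mul_eq_one_left h'.symm, cs.inv_simple]
  · rw [hb.dist_self, eq_comm, hb.eq_one_iff] at h'
    rwa [h'] at h ⊢

theorem exists_adj_dist_eq_mul_simple (hb : IsBuilding cs δC) (a d : C) (i : B) :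
    ∃ d' : C, δC d' d = cs.simple i ∧ δC a d' = δC a d * cs.simple i := by
  obtain ⟨d', hdd', had'⟩ := hb.wd3 a d i
  exact ⟨d', hb.dist_symm_of_eq_simple hdd', had'⟩

theorem exists_gallery_map_dist_eq (hb : IsBuilding cs δC) (a : C) {η : List W} {c : C}
    (hη : IsWGallery cs η) (hlast : η.getLast? = some (δC a c)) :
    ∃ G : List C, IsGallery cs δC G ∧ G.map (δC a) = η ∧ G.getLast? = some c := by
  induction η generalizing c with
  | nil => simp at hlast
  | cons x t ih =>
    cases t with
    | nil =>
      refine ⟨[c], List.isChain_singleton c, ?_, rfl⟩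
      simpa [eq_comm] using hlast
    | cons y t =>
      obtain ⟨⟨i, hy⟩, hη⟩ := List.isChain_cons_cons.mp hη
      obtain ⟨G, hG, hmap, hGlast⟩ := ih hη (by simpa using hlast)
      obtain _ | ⟨d, G⟩ := G
      · simp at hmap
      obtain ⟨had, hmap⟩ := List.cons_eq_cons.mp hmap
      obtain ⟨d', hd'd, had'⟩ := hb.exists_adj_dist_eq_mul_simple a d i
      have hx : δC a d' = x := by
        rw [had', had, hy, mul_assoc, cs.simple_mul_simple_self, mul_one]
      refine ⟨d' :: d :: G, List.isChain_cons_cons.mpr ⟨⟨i, hd'd⟩, hG⟩, ?_, ?_⟩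
      · simp [hx, had, hmap]
      · simpa using hGlast

end IsBuilding

theorem exists_minimal_gallery_extending_general {B W C : Type*} [Group W] {M : CoxeterMatrix B}
    (cs : CoxeterSystem M W) (δC : C → C → W) (hb : IsBuilding cs δC) (Bc c : C)
    (γ : List W)
    (hext : ∃ η : List W, IsMinWGallery cs 1 (δC Bc c) η ∧ γ <+: η) :
    ∃ G : List C, IsMinGallery cs δC Bc c G ∧ γ <+: (G.map (δC Bc)) := by
  obtain ⟨η, ⟨hηgal, hηhead, hηlast, hηlen⟩, hγη⟩ := hext
  obtain ⟨G, hG, hmap, hGlast⟩ := hb.exists_gallery_map_dist_eq Bc hηgal hηlast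
  have hGhead : G.head? = some Bc := by
    have h1 : (G.map (δC Bc)).head? = some 1 := hmap ▸ hηhead
    obtain ⟨d, hd, hd1⟩ := Option.map_eq_some_iff.mp (List.head?_map ▸ h1)
    rw [hd, (hb.eq_one_iff Bc d).mp hd1]
  refine ⟨G, ⟨hG, hGhead, hGlast, ?_⟩, hmap ▸ hγη⟩
  rw [← List.length_map (δC Bc), hmap, hηlen, inv_one, one_mul]

/-- If some minimal gallery in `W` from `1` to the image of `c` under the folding map begins
with the minimal gallery `γ`, then there is a minimal gallery from `Bc` to `c` in the
building whose projection begins with `γ`. -/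
theorem exists_minimal_gallery_extending {B W C : Type*} [Group W] {M : CoxeterMatrix B}
    (cs : CoxeterSystem M W) (δC : C → C → W) (hb : IsBuilding cs δC) (Bc c : C)
    (w : W) (γ : List W) (hγ : IsMinWGallery cs 1 w γ)
    (hext : ∃ η : List W, IsMinWGallery cs 1 (δC Bc c) η ∧ γ <+: η) :
    ∃ G : List C, IsMinGallery cs δC Bc c G ∧ γ <+: (G.map (δC Bc)) :=
  exists_minimal_gallery_extending_general cs δC hb Bc c γ hext
end

section
/- Let C be a building of type (W,S), B a fixed chamber, π the folding map, γ a fixed minimal gallery in W from 1 to w. If Γ₁Δ₁ and Γ₂Δ₂ are two minimal galleries from B to the same chamber c in C such that π(Γ₁) = π(Γ₂) = γ, then Γ₁ = Γ₂. In particular, the chamber of Γ_i lying over w is uniquely determined by c and γ. -/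
/-!
Along a minimal gallery from `a` to `b`, the `k`-th chamber lies at distance of length `k`
from `a` and `ℓ(δ(a, b)) - k` from `b`. So if two minimal galleries from `a` to `b` agree up
to a chamber `d` and their next chambers `x`, `y` have the same `W`-distance from `a`, then
`x` and `y` lie in the same panel of `d` and have the same `W`-distance from `b`, being one
step closer to `b` than `d`; both are then the projection of `b` onto that panel, so `x = y`.
Induction along the common projection `γ` gives the theorem.
-/

theorem CoxeterSystem.simple_ne_one {B W : Type*} [Group W] {M : CoxeterMatrix B}
    (cs : CoxeterSystem M W) (i : B) : cs.simple i ≠ 1 := fun h => by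
  simpa [h] using cs.length_simple i

section Buildings

variable {B W C : Type*} [Group W] {M : CoxeterMatrix B} {cs : CoxeterSystem M W}
  {δC : C → C → W} {a b : C} {l : List C}

theorem IsBuilding.dist_self_s13 (hb : IsBuilding cs δC) (c : C) : δC c c = 1 :=
  (hb.eq_one_iff c c).mpr rfl

theorem IsBuilding.dist_comm_of_eq_simple (hb : IsBuilding cs δC) {d d' : C} {i : B}
    (h : δC d d' = cs.simple i) : δC d' d = cs.simple i := by
  rcases hb.wd2 d' d d' i h with h' | h'
  · rw [hb.dist_self_s13, eq_comm, mul_eq_one_iff_eq_inv, cs.inv_simple] at h'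
    exact h'
  · rw [hb.dist_self_s13, eq_comm, hb.eq_one_iff] at h'
    subst h'
    exact absurd (h.symm.trans (hb.dist_self_s13 d')) (cs.simple_ne_one i)

theorem IsBuilding.length_dist_le_of_eq_simple (hb : IsBuilding cs δC) (x : C) {d d' : C}
    {i : B} (h : δC d d' = cs.simple i) : cs.length (δC x d') ≤ cs.length (δC x d) + 1 := by
  rcases hb.wd2 x d d' i h with h' | h' <;> rw [h']
  · exact (cs.length_mul_simple (δC x d) i).elim le_of_eq (by omega)
  · omega

theorem IsBuilding.dist_eq_mul_simple_of_length_ne (hb : IsBuilding cs δC) {x d d' : C}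
    {i : B} (h : δC d d' = cs.simple i) (hne : cs.length (δC x d') ≠ cs.length (δC x d)) :
    δC x d' = δC x d * cs.simple i :=
  (hb.wd2 x d d' i h).resolve_right fun h' => hne (by rw [h'])

/-- The projection of `c` onto a panel is unique. -/
theorem IsBuilding.eq_of_dist_eq (hb : IsBuilding cs δC) {c d x y : C} {i : B}
    (hdx : δC d x = cs.simple i) (hdy : δC d y = cs.simple i) (hxy : δC c x = δC c y)
    (hlen : cs.length (δC c x * cs.simple i) = cs.length (δC c x) + 1) : x = y := by
  rcases hb.wd2 x d y i hdy with h | h <;> rw [hb.dist_comm_of_eq_simple hdx] at h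
  · rwa [cs.simple_mul_simple_self, hb.eq_one_iff] at h
  · have hcy := hb.wd2' c x y i h hlen
    rw [← hxy] at hcy
    exact absurd (congrArg cs.length hcy) (cs.length_mul_simple_ne _ i).symm

theorem IsBuilding.length_dist_getElem_le (hb : IsBuilding cs δC) (hl : IsGallery cs δC l)
    (x : C) {j k : ℕ} (hjk : j ≤ k) (hk : k < l.length) :
    cs.length (δC x l[k]) ≤ cs.length (δC x l[j]) + (k - j) ∧
      cs.length (δC x l[j]) ≤ cs.length (δC x l[k]) + (k - j) := by
  induction k, hjk using Nat.le_induction with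
  | base => simp
  | succ k hjk ih =>
    obtain ⟨i, hi⟩ := List.isChain_iff_getElem.mp hl k hk
    have h₁ := hb.length_dist_le_of_eq_simple x hi
    have h₂ := hb.length_dist_le_of_eq_simple x (hb.dist_comm_of_eq_simple hi)
    have := ih (by omega)
    omega

theorem IsMinGallery.getElem_zero (hl : IsMinGallery cs δC a b l) (h : 0 < l.length) :
    l[0] = a := by
  simpa [List.head?_eq_getElem?, h] using hl.2.1

theorem IsMinGallery.getElem_length_dist (hl : IsMinGallery cs δC a b l)
    (h : cs.length (δC a b) < l.length) : l[cs.length (δC a b)] = b := by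
  simpa [List.getLast?_eq_getElem?, hl.2.2.2] using hl.2.2.1

theorem IsBuilding.exists_isMinGallery (hb : IsBuilding cs δC) (a b : C) :
    ∃ l, IsMinGallery cs δC a b l := by
  generalize hn : cs.length (δC a b) = n
  induction n generalizing b with
  | zero =>
    rw [cs.length_eq_zero_iff, hb.eq_one_iff] at hn
    subst hn
    exact ⟨[a], List.isChain_singleton a, rfl, rfl, by simp [hb.dist_self_s13]⟩
  | succ n ih =>
    obtain ⟨i, hi⟩ := cs.exists_rightDescent_of_ne_one (w := δC a b) fun h => by
      simp [h] at hn
    rw [cs.isRightDescent_iff] at hi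
    obtain ⟨b', hbb', hab'⟩ := hb.wd3 a b i
    have hn' : cs.length (δC a b') = n := by rw [hab']; omega
    obtain ⟨l, hl, hla, hlb', hlen⟩ := ih b' hn'
    have hne : l ≠ [] := by rintro rfl; simp at hla
    refine ⟨l ++ [b], ?_, ?_, List.getLast?_concat, by simp [hlen, hn, hn']⟩
    · refine hl.append (List.isChain_singleton b) fun x hx y hy => ?_
      simp only [hlb', List.head?_cons, Option.mem_def, Option.some.injEq] at hx hy
      subst hx hy
      exact ⟨i, hb.dist_comm_of_eq_simple hbb'⟩
    · rwa [List.head?_append_of_ne_nil _ hne]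

theorem IsMinGallery.length_dist_left_getElem (hb : IsBuilding cs δC)
    (hl : IsMinGallery cs δC a b l) {k : ℕ} (hk : k < l.length) :
    cs.length (δC a l[k]) = k := by
  have hn := hl.2.2.2
  have h₁ := (hb.length_dist_getElem_le hl.1 a (Nat.zero_le k) hk).1
  have h₂ := (hb.length_dist_getElem_le hl.1 a (j := k) (k := cs.length (δC a b))
    (by omega) (by omega)).1
  rw [hl.getElem_zero, hb.dist_self_s13, cs.length_one] at h₁
  rw [hl.getElem_length_dist] at h₂
  omega

theorem IsBuilding.length_dist_comm (hb : IsBuilding cs δC) (a b : C) :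
    cs.length (δC b a) = cs.length (δC a b) := by
  have key : ∀ x y : C, cs.length (δC y x) ≤ cs.length (δC x y) := fun x y => by
    obtain ⟨l, hl⟩ := hb.exists_isMinGallery x y
    have h := (hb.length_dist_getElem_le hl.1 y (Nat.zero_le (cs.length (δC x y)))
      (by have := hl.2.2.2; omega)).2
    rw [hl.getElem_zero, hl.getElem_length_dist, hb.dist_self_s13, cs.length_one] at h
    omega
  exact le_antisymm (key a b) (key b a)

theorem IsMinGallery.length_dist_right_getElem (hb : IsBuilding cs δC)
    (hl : IsMinGallery cs δC a b l) {k : ℕ} (hk : k < l.length) :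
    cs.length (δC b l[k]) + k = cs.length (δC a b) := by
  have hn := hl.2.2.2
  have h₁ := (hb.length_dist_getElem_le hl.1 b (j := k) (k := cs.length (δC a b))
    (by omega) (by omega)).2
  have h₂ := (hb.length_dist_getElem_le hl.1 b (Nat.zero_le k) hk).2
  rw [hl.getElem_length_dist, hb.dist_self_s13, cs.length_one] at h₁
  rw [hl.getElem_zero, hb.length_dist_comm] at h₂
  omega

theorem IsMinGallery.dist_left_getElem_succ (hb : IsBuilding cs δC)
    (hl : IsMinGallery cs δC a b l) {k : ℕ} (hk : k + 1 < l.length) {i : B}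
    (hi : δC l[k] l[k + 1] = cs.simple i) : δC a l[k + 1] = δC a l[k] * cs.simple i :=
  hb.dist_eq_mul_simple_of_length_ne hi <| by
    rw [hl.length_dist_left_getElem hb, hl.length_dist_left_getElem hb]; omega

theorem IsMinGallery.dist_right_getElem (hb : IsBuilding cs δC)
    (hl : IsMinGallery cs δC a b l) {k : ℕ} (hk : k + 1 < l.length) {i : B}
    (hi : δC l[k] l[k + 1] = cs.simple i) : δC b l[k] = δC b l[k + 1] * cs.simple i := by
  refine hb.dist_eq_mul_simple_of_length_ne (hb.dist_comm_of_eq_simple hi) ?_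
  have h₁ := hl.length_dist_right_getElem hb (k := k) (by omega)
  have h₂ := hl.length_dist_right_getElem hb hk
  omega

theorem IsMinGallery.getElem_succ_eq (hb : IsBuilding cs δC) {l₁ l₂ : List C}
    (hl₁ : IsMinGallery cs δC a b l₁) (hl₂ : IsMinGallery cs δC a b l₂) {k : ℕ}
    (h₁ : k + 1 < l₁.length) (h₂ : k + 1 < l₂.length) (hk : l₁[k] = l₂[k])
    (hπ : δC a l₁[k + 1] = δC a l₂[k + 1]) : l₁[k + 1] = l₂[k + 1] := by
  obtain ⟨i, hx⟩ := List.isChain_iff_getElem.mp hl₁.1 k h₁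
  obtain ⟨j, hy⟩ := List.isChain_iff_getElem.mp hl₂.1 k h₂
  have hij : cs.simple i = cs.simple j := by
    have h := hl₂.dist_left_getElem_succ hb h₂ hy
    rw [← hπ, hl₁.dist_left_getElem_succ hb h₁ hx, hk] at h
    exact mul_left_cancel h
  rw [← hij] at hy
  have hbx := hl₁.dist_right_getElem hb h₁ hx
  have hby := hl₂.dist_right_getElem hb h₂ hy
  rw [← hk] at hy hby
  refine hb.eq_of_dist_eq hx hy (mul_right_cancel (hbx.symm.trans hby)) ?_
  rw [← hbx]
  have h₃ := hl₁.length_dist_right_getElem hb (k := k) (by omega)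
  have h₄ := hl₁.length_dist_right_getElem hb h₁
  omega

theorem IsMinGallery.eq_of_isPrefix_of_map_eq (hb : IsBuilding cs δC) {l₁ l₂ Γ₁ Γ₂ : List C}
    (hl₁ : IsMinGallery cs δC a b l₁) (hl₂ : IsMinGallery cs δC a b l₂)
    (hΓ₁ : Γ₁ <+: l₁) (hΓ₂ : Γ₂ <+: l₂) (hπ : Γ₁.map (δC a) = Γ₂.map (δC a)) : Γ₁ = Γ₂ := by
  refine List.ext_getElem (by simpa using congrArg List.length hπ) fun k h₁ h₂ => ?_
  have hl₁k := hΓ₁.length_le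
  have hl₂k := hΓ₂.length_le
  rw [hΓ₁.getElem h₁, hΓ₂.getElem h₂]
  induction k with
  | zero => rw [hl₁.getElem_zero, hl₂.getElem_zero]
  | succ k ih =>
    refine hl₁.getElem_succ_eq hb hl₂ (by omega) (by omega) (ih (by omega) (by omega)) ?_
    have h := List.getElem_of_eq hπ (by simpa using h₁)
    rw [List.getElem_map, List.getElem_map] at h
    rwa [hΓ₁.getElem h₁, hΓ₂.getElem h₂] at h

end Buildings

theorem initial_segment_unique_general {B W C : Type*} [Group W] {M : CoxeterMatrix B}
    (cs : CoxeterSystem M W) (δC : C → C → W) (hb : IsBuilding cs δC) (Bc c : C)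
    (γ : List W)
    (G₁ G₂ Γ₁ Γ₂ : List C)
    (hG₁ : IsMinGallery cs δC Bc c G₁) (hG₂ : IsMinGallery cs δC Bc c G₂)
    (hΓ₁ : Γ₁ <+: G₁) (hΓ₂ : Γ₂ <+: G₂)
    (hπ₁ : Γ₁.map (δC Bc) = γ) (hπ₂ : Γ₂.map (δC Bc) = γ) :
    Γ₁ = Γ₂ :=
  hG₁.eq_of_isPrefix_of_map_eq hb hG₂ hΓ₁ hΓ₂ (hπ₁.trans hπ₂.symm)

/-- Two minimal galleries from `Bc` to the same chamber `c` whose initial segments both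
project to the same minimal gallery `γ` in `W` have equal initial segments; in particular
the chamber lying over the endpoint of `γ` is determined by `c` and `γ`. -/
theorem initial_segment_unique {B W C : Type*} [Group W] {M : CoxeterMatrix B}
    (cs : CoxeterSystem M W) (δC : C → C → W) (hb : IsBuilding cs δC) (Bc c : C)
    (w : W) (γ : List W) (hγ : IsMinWGallery cs 1 w γ)
    (G₁ G₂ Γ₁ Γ₂ : List C)
    (hG₁ : IsMinGallery cs δC Bc c G₁) (hG₂ : IsMinGallery cs δC Bc c G₂)
    (hΓ₁ : Γ₁ <+: G₁) (hΓ₂ : Γ₂ <+: G₂)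
    (hπ₁ : Γ₁.map (δC Bc) = γ) (hπ₂ : Γ₂.map (δC Bc) = γ) :
    Γ₁ = Γ₂ :=
  initial_segment_unique_general cs δC hb Bc c γ G₁ G₂ Γ₁ Γ₂ hG₁ hG₂ hΓ₁ hΓ₂ hπ₁ hπ₂
end
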